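/- arXiv:1106.1114 — 3 statements merged into one kernel-verified Lean document; each statement's English description precedes it below -/
import Mathlib

section
/- Let |ψ⟩ have Schmidt decomposition |ψ⟩ = Σ_i λ_i |μ_i⟩⊗|ν_i⟩ with λ_i ≥ 0 with respect to a bipartition of a finite-dimensional Hilbert space. Then for every normalized vector |φ⟩, ⟨φ| (|ψ⟩⟨ψ|)^{T_A} |φ⟩ ≤ max_i λ_i². -/
/-! With `c i j = ⟨μ̄ᵢ ⊗ νⱼ|φ⟩`, the partial transpose of `|ψ⟩⟨ψ|` is
`∑ᵢⱼ λᵢ λⱼ |μ̄ⱼ ⊗ νᵢ⟩⟨μ̄ᵢ ⊗ νⱼ|`, so the quadratic form at `φ` is `∑ᵢⱼ conj (d j i) * d i j` with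
`d i j = λᵢ c i j`. This is the quadratic form of the swap `(i, j) ↦ (j, i)`, whose real part is at
most `∑ |d i j|² ≤ (max λᵢ²) ∑ |c i j|²`. The vectors `μ̄ᵢ ⊗ νⱼ` are orthonormal, so Bessel's
inequality bounds `∑ |c i j|²` by `‖φ‖² = 1`. -/

open Matrix ComplexOrder

/-- Partial transposition on the first tensor factor, in a fixed product basis. -/
def ptA {α β : Type*} (ρ : Matrix (α × β) (α × β) ℂ) : Matrix (α × β) (α × β) ℂ :=
  Matrix.of fun p q => ρ (q.1, p.2) (p.1, q.2)

theorem vecMulVec_sum_sum {ι κ m n R : Type*} [Fintype ι] [Fintype κ]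
    [NonUnitalNonAssocSemiring R] (x : ι → m → R) (y : κ → n → R) :
    vecMulVec (∑ i, x i) (∑ j, y j) = ∑ i, ∑ j, vecMulVec (x i) (y j) := by
  ext p q
  simp only [vecMulVec_apply, Matrix.sum_apply, Finset.sum_apply, Finset.sum_mul_sum]

theorem star_dotProduct_vecMulVec_mulVec {n : Type*} [Fintype n] (φ x y : n → ℂ) :
    star φ ⬝ᵥ vecMulVec x (star y) *ᵥ φ = star (star x ⬝ᵥ φ) * (star y ⬝ᵥ φ) := by
  rw [vecMulVec_mulVec, star_dotProduct]
  simp [mul_comm]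

theorem sum_norm_sq_star_dotProduct_le {ι n 𝕜 : Type*} [Fintype ι] [Fintype n] [DecidableEq ι]
    [RCLike 𝕜] {u : ι → n → 𝕜} (hu : ∀ i j, star (u i) ⬝ᵥ u j = if i = j then 1 else 0)
    (x : n → 𝕜) :
    ∑ i, ‖star (u i) ⬝ᵥ x‖ ^ 2 ≤ RCLike.re (star x ⬝ᵥ x) := by
  have hon : Orthonormal 𝕜 fun i => (WithLp.toLp 2 (u i) : EuclideanSpace 𝕜 n) := by
    rw [orthonormal_iff_ite]
    intro i j
    rw [EuclideanSpace.inner_toLp_toLp, dotProduct_comm, hu]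
  have hbessel :=
    hon.sum_inner_products_le (s := Finset.univ) (x := (WithLp.toLp 2 x : EuclideanSpace 𝕜 n))
  rw [← inner_self_eq_norm_sq (𝕜 := 𝕜), EuclideanSpace.inner_toLp_toLp, dotProduct_comm] at hbessel
  simpa only [EuclideanSpace.inner_toLp_toLp, dotProduct_comm x] using hbessel

theorem re_sum_star_swap_mul_le {ι 𝕜 : Type*} [Fintype ι] [RCLike 𝕜] (d : ι → ι → 𝕜) :
    RCLike.re (∑ i, ∑ j, star (d j i) * d i j) ≤ ∑ i, ∑ j, ‖d i j‖ ^ 2 := by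
  have hterm (z w : 𝕜) : RCLike.re (star z * w) ≤ (‖z‖ ^ 2 + ‖w‖ ^ 2) / 2 :=
    calc RCLike.re (star z * w) ≤ ‖z‖ * ‖w‖ := by
          simpa only [norm_mul, norm_star] using RCLike.re_le_norm (star z * w)
      _ ≤ (‖z‖ ^ 2 + ‖w‖ ^ 2) / 2 := by nlinarith [sq_nonneg (‖z‖ - ‖w‖)]
  calc RCLike.re (∑ i, ∑ j, star (d j i) * d i j)
      = ∑ i, ∑ j, RCLike.re (star (d j i) * d i j) := by simp only [map_sum]
    _ ≤ ∑ i, ∑ j, (‖d j i‖ ^ 2 + ‖d i j‖ ^ 2) / 2 := by gcongr with i _ j _; exact hterm _ _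
    _ = ∑ i, ∑ j, ‖d i j‖ ^ 2 := by
      simp only [Finset.sum_add_distrib, add_div]
      rw [Finset.sum_comm (f := fun i j => ‖d j i‖ ^ 2 / 2)]
      simp only [← Finset.sum_add_distrib, add_halves]

section TensorVec

variable {α β ι κ R : Type*}

def tensorVec [Mul R] (a : α → R) (b : β → R) : α × β → R := fun p => a p.1 * b p.2

variable [CommSemiring R]

theorem tensorVec_smul_left (r : R) (a : α → R) (b : β → R) :
    tensorVec (r • a) b = r • tensorVec a b := by
  ext p
  simp [tensorVec, mul_assoc]

theorem tensorVec_dotProduct_tensorVec [Fintype α] [Fintype β] (a a' : α → R) (b b' : β → R) :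
    tensorVec a b ⬝ᵥ tensorVec a' b' = (a ⬝ᵥ a') * (b ⬝ᵥ b') := by
  simp only [dotProduct, tensorVec, Fintype.sum_prod_type, Finset.sum_mul_sum]
  exact Finset.sum_congr rfl fun _ _ => Finset.sum_congr rfl fun _ _ => by ring

variable [StarRing R]

theorem star_tensorVec (a : α → R) (b : β → R) :
    star (tensorVec a b) = tensorVec (star a) (star b) := by
  ext p
  simp [tensorVec]

theorem star_dotProduct_star_of_orthonormal [Fintype α] [DecidableEq ι] {u : ι → α → R}
    (hu : ∀ i j, star (u i) ⬝ᵥ u j = if i = j then 1 else 0) (i j : ι) :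
    star (star (u i)) ⬝ᵥ star (u j) = if i = j then 1 else 0 := by
  rw [star_star, dotProduct_comm, hu j i]
  exact if_congr eq_comm rfl rfl

theorem tensorVec_orthonormal [Fintype α] [Fintype β] [DecidableEq ι] [DecidableEq κ]
    {u : ι → α → R} {v : κ → β → R}
    (hu : ∀ i j, star (u i) ⬝ᵥ u j = if i = j then 1 else 0)
    (hv : ∀ k l, star (v k) ⬝ᵥ v l = if k = l then 1 else 0) (w w' : ι × κ) :
    star (tensorVec (u w.1) (v w.2)) ⬝ᵥ tensorVec (u w'.1) (v w'.2) =
      if w = w' then 1 else 0 := by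
  rw [star_tensorVec, tensorVec_dotProduct_tensorVec, hu, hv, ite_zero_mul_ite_zero, one_mul]
  exact if_congr Prod.ext_iff.symm rfl rfl

end TensorVec

section PartialTranspose

variable {α β ι : Type*}

theorem ptA_sum [Fintype ι] (ρ : ι → Matrix (α × β) (α × β) ℂ) :
    ptA (∑ i, ρ i) = ∑ i, ptA (ρ i) := by
  ext p q
  simp [ptA, Matrix.sum_apply]

theorem ptA_vecMulVec_tensorVec (a c : α → ℂ) (b d : β → ℂ) :
    ptA (vecMulVec (tensorVec a b) (star (tensorVec c d))) =
      vecMulVec (tensorVec (star c) b) (star (tensorVec (star a) d)) := by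
  ext p q
  simp only [ptA, of_apply, vecMulVec_apply, star_tensorVec, star_star, tensorVec, Pi.star_apply]
  ring

theorem star_dotProduct_ptA_mulVec [Fintype α] [Fintype β] [Fintype ι]
    (a : ι → α → ℂ) (b : ι → β → ℂ) (φ : α × β → ℂ) :
    star φ ⬝ᵥ ptA (vecMulVec (∑ i, tensorVec (a i) (b i)) (star (∑ i, tensorVec (a i) (b i))))
        *ᵥ φ =
      ∑ i, ∑ j, star (star (tensorVec (star (a j)) (b i)) ⬝ᵥ φ) *
        (star (tensorVec (star (a i)) (b j)) ⬝ᵥ φ) := by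
  simp only [star_sum, vecMulVec_sum_sum, ptA_sum, ptA_vecMulVec_tensorVec, sum_mulVec,
    dotProduct_sum, star_dotProduct_vecMulVec_mulVec]

end PartialTranspose

theorem stmt4_general {α β : Type*} [Fintype α] [Fintype β] {m : ℕ}
    (lam : Fin m → ℝ) (μ : Fin m → α → ℂ) (ν : Fin m → β → ℂ)
    (hμ : ∀ i j, star (μ i) ⬝ᵥ μ j = if i = j then 1 else 0)
    (hν : ∀ i j, star (ν i) ⬝ᵥ ν j = if i = j then 1 else 0)
    (ψ : α × β → ℂ) (hψ : ψ = fun p => ∑ i, (lam i : ℂ) * μ i p.1 * ν i p.2)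
    (φ : α × β → ℂ) (hφ : star φ ⬝ᵥ φ = 1) :
    (star φ ⬝ᵥ (ptA (Matrix.of fun p q => ψ p * star (ψ q))) *ᵥ φ).re ≤ ⨆ i, (lam i) ^ 2 := by
  set M := ⨆ i, lam i ^ 2
  have hM : ∀ i, lam i ^ 2 ≤ M := le_ciSup (Set.finite_range _).bddAbove
  have hM0 : 0 ≤ M := Real.iSup_nonneg fun i => sq_nonneg _
  set c : Fin m × Fin m → ℂ := fun w => star (tensorVec (star (μ w.1)) (ν w.2)) ⬝ᵥ φ
  have hψ' : ψ = ∑ i, tensorVec ((lam i : ℂ) • μ i) (ν i) := by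
    subst hψ
    ext p
    simp [tensorVec, Finset.sum_apply, mul_assoc]
  have hexpand : star φ ⬝ᵥ ptA (of fun p q => ψ p * star (ψ q)) *ᵥ φ =
      ∑ i, ∑ j, star ((lam j : ℂ) * c (j, i)) * ((lam i : ℂ) * c (i, j)) := by
    rw [hψ']
    refine (star_dotProduct_ptA_mulVec _ _ φ).trans ?_
    simp only [c, star_tensorVec, star_star, tensorVec_smul_left, smul_dotProduct, smul_eq_mul]
  have hbessel : ∑ w, ‖c w‖ ^ 2 ≤ 1 := by
    simpa [hφ] using sum_norm_sq_star_dotProduct_le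
      (tensorVec_orthonormal (star_dotProduct_star_of_orthonormal hμ) hν) φ
  calc (star φ ⬝ᵥ ptA (of fun p q => ψ p * star (ψ q)) *ᵥ φ).re
      = RCLike.re (∑ i, ∑ j, star ((lam j : ℂ) * c (j, i)) * ((lam i : ℂ) * c (i, j))) := by
        rw [hexpand]; rfl
    _ ≤ ∑ i, ∑ j, ‖(lam i : ℂ) * c (i, j)‖ ^ 2 := re_sum_star_swap_mul_le _
    _ = ∑ i, lam i ^ 2 * ∑ j, ‖c (i, j)‖ ^ 2 := by simp [mul_pow, Finset.mul_sum]
    _ ≤ ∑ i, M * ∑ j, ‖c (i, j)‖ ^ 2 := by gcongr with i; exact hM i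
    _ = M * ∑ w, ‖c w‖ ^ 2 := by rw [← Finset.mul_sum, Fintype.sum_prod_type]
    _ ≤ M := mul_le_of_le_one_right hM0 hbessel

/-- For `|ψ⟩ = Σ λ_i |μ_i⟩⊗|ν_i⟩` a Schmidt decomposition and any unit vector `|φ⟩`,
`⟨φ|(|ψ⟩⟨ψ|)^{T_A}|φ⟩ ≤ max_i λ_i²`. -/
theorem stmt4 {α β : Type*} [Fintype α] [Fintype β] {m : ℕ}
    (lam : Fin m → ℝ) (μ : Fin m → α → ℂ) (ν : Fin m → β → ℂ)
    (hlam : ∀ i, 0 ≤ lam i)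
    (hμ : ∀ i j, star (μ i) ⬝ᵥ μ j = if i = j then 1 else 0)
    (hν : ∀ i j, star (ν i) ⬝ᵥ ν j = if i = j then 1 else 0)
    (ψ : α × β → ℂ) (hψ : ψ = fun p => ∑ i, (lam i : ℂ) * μ i p.1 * ν i p.2)
    (φ : α × β → ℂ) (hφ : star φ ⬝ᵥ φ = 1) :
    (star φ ⬝ᵥ (ptA (Matrix.of fun p q => ψ p * star (ψ q))) *ᵥ φ).re ≤ ⨆ i, (lam i) ^ 2 :=
  stmt4_general lam μ ν hμ hν ψ hψ φ hφ
end

section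
/- For a pure state |ψ⟩ on H_A ⊗ H_B with Schmidt coefficients λ_i, the operator W = (1/2)·𝟙 - |ψ⟩⟨ψ| satisfies 0 ≤ W^{T_A} ≤ 𝟙, provided max_i λ_i² ≤ 1/2 and |ψ⟩ has at least two nonzero Schmidt coefficients. -/
/-!
Write `ψ = ∑ λᵢ μᵢ ⊗ νᵢ`. The partial transpose of `|ψ⟩⟨ψ|` has quadratic form
`x ↦ ∑ᵢⱼ λᵢ λⱼ conj (cⱼᵢ) cᵢⱼ`, where `cᵢⱼ = ⟨conj μᵢ ⊗ νⱼ, x⟩`. Since `λᵢ λⱼ ≤ max λ² ≤ 1/2`,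
AM-GM bounds its modulus by `(1/2) ∑ |cᵢⱼ|²`, and Bessel's inequality for the orthonormal family
`conj μᵢ ⊗ νⱼ` bounds this by `‖x‖² / 2`. So `-1/2 ≤ (|ψ⟩⟨ψ|)^{T_A} ≤ 1/2`, i.e. `0 ≤ W^{T_A} ≤ 1`.
-/

open Matrix ComplexOrder

open ComplexConjugate

section PartialTranspose

variable {α β : Type*}

lemma ptA_sub (M N : Matrix (α × β) (α × β) ℂ) : ptA (M - N) = ptA M - ptA N := rfl

lemma ptA_smul (c : ℂ) (M : Matrix (α × β) (α × β) ℂ) : ptA (c • M) = c • ptA M := rfl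

lemma ptA_one [DecidableEq α] [DecidableEq β] : ptA (1 : Matrix (α × β) (α × β) ℂ) = 1 := by
  ext ⟨a, b⟩ ⟨c, d⟩
  by_cases h : a = c <;> simp [ptA, one_apply, h, eq_comm]

lemma Matrix.IsHermitian.ptA {M : Matrix (α × β) (α × β) ℂ} (h : M.IsHermitian) :
    (ptA M).IsHermitian :=
  ext fun p q => h.apply (q.1, p.2) (p.1, q.2)

end PartialTranspose

lemma star_dotProduct_ptA_pure_mulVec {α β ι : Type*} [Fintype α] [Fintype β] [Fintype ι]
    (lam : ι → ℝ) (μ : ι → α → ℂ) (ν : ι → β → ℂ) (x : α × β → ℂ) :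
    star x ⬝ᵥ (ptA (of fun p q => (∑ i, (lam i : ℂ) * μ i p.1 * ν i p.2) *
        star (∑ i, (lam i : ℂ) * μ i q.1 * ν i q.2)) *ᵥ x)
      = ∑ i, ∑ j, (lam i * lam j : ℂ) * conj (∑ q : α × β, x q * μ j q.1 * conj (ν i q.2)) *
          ∑ q : α × β, x q * μ i q.1 * conj (ν j q.2) := by
  simp only [dotProduct, mulVec, ptA, of_apply, Pi.star_apply, star_sum, star_mul', map_sum,
    map_mul, Complex.star_def, Complex.conj_conj, Complex.conj_ofReal, Finset.mul_sum,
    Finset.sum_mul]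
  simp_rw [Finset.sum_comm (s := (Finset.univ : Finset (α × β))) (t := (Finset.univ : Finset ι))]
  rw [Finset.sum_comm]
  refine Finset.sum_congr rfl fun i _ => Finset.sum_congr rfl fun j _ => ?_
  rw [Finset.sum_comm]
  exact Finset.sum_congr rfl fun p _ => Finset.sum_congr rfl fun q _ => by ring

section Bessel

variable {α β ι κ : Type*} [Fintype α] [Fintype β] [DecidableEq ι] [DecidableEq κ]
  {μ : ι → α → ℂ} {ν : κ → β → ℂ}

lemma orthonormal_conj_mul_of_dotProduct
    (hμ : ∀ i j, star (μ i) ⬝ᵥ μ j = if i = j then 1 else 0)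
    (hν : ∀ i j, star (ν i) ⬝ᵥ ν j = if i = j then 1 else 0) :
    Orthonormal ℂ fun ij : ι × κ =>
      WithLp.toLp 2 fun q : α × β => conj (μ ij.1 q.1) * ν ij.2 q.2 := by
  rw [orthonormal_iff_ite]
  rintro ⟨i, j⟩ ⟨k, l⟩
  have hinner : inner ℂ (WithLp.toLp 2 fun q : α × β => conj (μ i q.1) * ν j q.2)
      (WithLp.toLp 2 fun q : α × β => conj (μ k q.1) * ν l q.2)
        = (star (μ k) ⬝ᵥ μ i) * (star (ν j) ⬝ᵥ ν l) := by
    rw [EuclideanSpace.inner_toLp_toLp, dotProduct, dotProduct, dotProduct, Finset.sum_mul_sum,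
      Fintype.sum_prod_type]
    refine Finset.sum_congr rfl fun a _ => Finset.sum_congr rfl fun b _ => ?_
    simp only [Pi.star_apply, Complex.star_def, map_mul, Complex.conj_conj]
    ring
  rw [hinner, hμ, hν]
  by_cases h1 : i = k <;> by_cases h2 : j = l <;> simp [h1, h2, eq_comm]

lemma sum_norm_sq_prod_coeff_le [Fintype ι] [Fintype κ]
    (hμ : ∀ i j, star (μ i) ⬝ᵥ μ j = if i = j then 1 else 0)
    (hν : ∀ i j, star (ν i) ⬝ᵥ ν j = if i = j then 1 else 0) (x : α × β → ℂ) :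
    ∑ i, ∑ j, ‖∑ q : α × β, x q * μ i q.1 * conj (ν j q.2)‖ ^ 2 ≤ ∑ q, ‖x q‖ ^ 2 := by
  have hbessel := (orthonormal_conj_mul_of_dotProduct hμ hν).sum_inner_products_le
    (s := Finset.univ) (WithLp.toLp 2 x)
  have hcoeff : ∀ i j, inner ℂ (WithLp.toLp 2 fun q : α × β => conj (μ i q.1) * ν j q.2)
      (WithLp.toLp 2 x) = ∑ q : α × β, x q * μ i q.1 * conj (ν j q.2) := fun i j => by
    rw [EuclideanSpace.inner_toLp_toLp, dotProduct]
    refine Finset.sum_congr rfl fun q _ => ?_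
    simp only [Pi.star_apply, Complex.star_def, map_mul, Complex.conj_conj]
    ring
  rw [Fintype.sum_prod_type, EuclideanSpace.norm_sq_eq] at hbessel
  simpa only [hcoeff] using hbessel

end Bessel

lemma norm_sum_mul_conj_le {ι : Type*} [Fintype ι] {lam : ι → ℝ} {K : ℝ}
    (hlam : ∀ i, 0 ≤ lam i) (hK : ∀ i, lam i ^ 2 ≤ K) (c : ι → ι → ℂ) :
    ‖∑ i, ∑ j, (lam i * lam j : ℂ) * conj (c j i) * c i j‖ ≤ K * ∑ i, ∑ j, ‖c i j‖ ^ 2 := by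
  have hterm : ∀ i j, ‖(lam i * lam j : ℂ) * conj (c j i) * c i j‖
      ≤ K / 2 * (‖c i j‖ ^ 2 + ‖c j i‖ ^ 2) := fun i j => by
    rw [norm_mul, norm_mul, RCLike.norm_conj, ← Complex.ofReal_mul, Complex.norm_real,
      Real.norm_of_nonneg (mul_nonneg (hlam i) (hlam j))]
    -- `lam i * lam j ≤ K` and `‖a‖ * ‖b‖ ≤ (‖a‖² + ‖b‖²) / 2`
    nlinarith [hK i, hK j, sq_nonneg (lam i - lam j), sq_nonneg (‖c i j‖ - ‖c j i‖),
      mul_nonneg (norm_nonneg (c i j)) (norm_nonneg (c j i)), hlam i, hlam j]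
  calc ‖∑ i, ∑ j, (lam i * lam j : ℂ) * conj (c j i) * c i j‖
      ≤ ∑ i, ∑ j, K / 2 * (‖c i j‖ ^ 2 + ‖c j i‖ ^ 2) :=
        (norm_sum_le _ _).trans <| Finset.sum_le_sum fun i _ =>
          (norm_sum_le _ _).trans <| Finset.sum_le_sum fun j _ => hterm i j
    _ = K * ∑ i, ∑ j, ‖c i j‖ ^ 2 := by
        simp only [mul_add, Finset.sum_add_distrib, ← Finset.mul_sum]
        rw [Finset.sum_comm (f := fun i j => ‖c j i‖ ^ 2)]
        ring

lemma star_dotProduct_self_eq {ι : Type*} [Fintype ι] (x : ι → ℂ) :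
    star x ⬝ᵥ x = ((∑ i, ‖x i‖ ^ 2 : ℝ) : ℂ) := by
  push_cast
  exact Finset.sum_congr rfl fun i _ => Complex.conj_mul' (x i)

lemma posSemidef_smul_one_sub_of_norm_le {ι : Type*} [Fintype ι] [DecidableEq ι]
    {A : Matrix ι ι ℂ} (hA : A.IsHermitian) {c : ℝ}
    (h : ∀ x, ‖star x ⬝ᵥ (A *ᵥ x)‖ ≤ c * ∑ i, ‖x i‖ ^ 2) :
    ((c : ℂ) • 1 - A).PosSemidef := by
  refine .of_dotProduct_mulVec_nonneg ((isHermitian_one.smul (IsSelfAdjoint.all c)).sub hA)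
    fun x => ?_
  rw [sub_mulVec, smul_mulVec, one_mulVec, dotProduct_sub, dotProduct_smul,
    star_dotProduct_self_eq, smul_eq_mul, ← Complex.ofReal_mul, Complex.nonneg_iff,
    Complex.sub_re, Complex.sub_im, Complex.ofReal_re, Complex.ofReal_im]
  have him : (star x ⬝ᵥ (A *ᵥ x)).im = 0 := hA.im_star_dotProduct_mulVec_self x
  have hre := (Complex.re_le_norm (star x ⬝ᵥ (A *ᵥ x))).trans (h x)
  constructor <;> linarith

theorem stmt6_general {α β : Type*} [Fintype α] [Fintype β] [DecidableEq α] [DecidableEq β] {m : ℕ}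
    (lam : Fin m → ℝ) (μ : Fin m → α → ℂ) (ν : Fin m → β → ℂ)
    (hlam : ∀ i, 0 ≤ lam i)
    (hmax : ∀ i, (lam i) ^ 2 ≤ 1/2)
    (hμ : ∀ i j, star (μ i) ⬝ᵥ μ j = if i = j then 1 else 0)
    (hν : ∀ i j, star (ν i) ⬝ᵥ ν j = if i = j then 1 else 0)
    (ψ : α × β → ℂ) (hψ : ψ = fun p => ∑ i, (lam i : ℂ) * μ i p.1 * ν i p.2)
    (W : Matrix (α × β) (α × β) ℂ)
    (hW : W = (2⁻¹ : ℂ) • 1 - Matrix.of (fun p q => ψ p * star (ψ q))) :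
    (ptA W).PosSemidef ∧ (1 - ptA W).PosSemidef := by
  subst hψ hW
  set ρ : Matrix (α × β) (α × β) ℂ := of fun p q => (∑ i, (lam i : ℂ) * μ i p.1 * ν i p.2) *
      star (∑ i, (lam i : ℂ) * μ i q.1 * ν i q.2)
  have hρ : (ptA ρ).IsHermitian := (posSemidef_vecMulVec_self_star _).isHermitian.ptA
  have hbound (x : α × β → ℂ) : ‖star x ⬝ᵥ (ptA ρ *ᵥ x)‖ ≤ 1 / 2 * ∑ q, ‖x q‖ ^ 2 := by
    rw [star_dotProduct_ptA_pure_mulVec]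
    exact (norm_sum_mul_conj_le hlam hmax _).trans
      (by gcongr; exact sum_norm_sq_prod_coeff_le hμ hν x)
  have hhalf : (2⁻¹ : ℂ) = ((1 / 2 : ℝ) : ℂ) := by norm_num
  rw [ptA_sub, ptA_smul, ptA_one, hhalf]
  refine ⟨posSemidef_smul_one_sub_of_norm_le hρ hbound, ?_⟩
  have hbound_neg (x : α × β → ℂ) : ‖star x ⬝ᵥ (-ptA ρ *ᵥ x)‖ ≤ 1 / 2 * ∑ q, ‖x q‖ ^ 2 := by
    simpa only [neg_mulVec, dotProduct_neg, norm_neg] using hbound x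
  convert posSemidef_smul_one_sub_of_norm_le hρ.neg hbound_neg using 1
  push_cast
  module

/-- For a pure state `|ψ⟩` with all squared Schmidt coefficients at most `1/2` and at
least two nonzero Schmidt coefficients, `W = (1/2)·𝟙 - |ψ⟩⟨ψ|` satisfies `0 ≤ W^{T_A} ≤ 𝟙`. -/
theorem stmt6 {α β : Type*} [Fintype α] [Fintype β] [DecidableEq α] [DecidableEq β] {m : ℕ}
    (lam : Fin m → ℝ) (μ : Fin m → α → ℂ) (ν : Fin m → β → ℂ)
    (hlam : ∀ i, 0 ≤ lam i) (hsum : ∑ i, (lam i) ^ 2 = 1)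
    (hmax : ∀ i, (lam i) ^ 2 ≤ 1/2)
    (htwo : ∃ i j, i ≠ j ∧ lam i ≠ 0 ∧ lam j ≠ 0)
    (hμ : ∀ i j, star (μ i) ⬝ᵥ μ j = if i = j then 1 else 0)
    (hν : ∀ i j, star (ν i) ⬝ᵥ ν j = if i = j then 1 else 0)
    (ψ : α × β → ℂ) (hψ : ψ = fun p => ∑ i, (lam i : ℂ) * μ i p.1 * ν i p.2)
    (W : Matrix (α × β) (α × β) ℂ)
    (hW : W = (2⁻¹ : ℂ) • 1 - Matrix.of (fun p q => ψ p * star (ψ q))) :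
    (ptA W).PosSemidef ∧ (1 - ptA W).PosSemidef :=
  stmt6_general lam μ ν hlam hmax hμ hν ψ hψ W hW
end

section
/- The bipartite negativity of any state ρ on C² ⊗ H (one qubit versus the rest) is at most 1/2, i.e., the sum of absolute values of the negative eigenvalues of ρ^{T_A} is at most 1/2, with equality attained for the Bell state (|00⟩+|11⟩)/√2. -/
/-
Let `d` be the dimension of the first factor and `R` the sign of `ρ^{T_A}`, a Hermitian
involution with `tr (ρ^{T_A} R) = ∑ |λᵢ|`. Partial transposition is self-dual for the trace, so
`∑ |λᵢ| = tr (ρ R^{T_A})`. With `Eᵢⱼ = |i⟩⟨j| ⊗ 1` one has `R^{T_A} = ∑ Eᵢⱼ R Eᵢⱼ`, and the sum of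
squares `∑ (Eᵢⱼ - R Eⱼᵢ)ᴴ (Eᵢⱼ - R Eⱼᵢ) = 2 (d - R^{T_A})` shows `R^{T_A} ≤ d`; hence
`∑ |λᵢ| ≤ d tr ρ = d`. As `∑ λᵢ = tr ρ = 1`, the negativity `(∑ |λᵢ| - ∑ λᵢ) / 2` is at most
`(d - 1) / 2`, which is `1/2` for a qubit. For the Bell state, `ρ^{T_A}` is half the swap
operator: its eigenvalues are `±1/2` and sum to `1`, so the negativity is `(2 - 1) / 2`.
-/

open Matrix ComplexOrder

/-- The Bell state `(|00⟩ + |11⟩)/√2`. -/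
noncomputable def bell : Fin 2 × Fin 2 → ℂ :=
  fun p => if p.1 = p.2 then (1 / Real.sqrt 2 : ℂ) else 0

open scoped Kronecker

theorem Finset.sum_abs_eq_sum_add_two_mul {ι : Type*} (s : Finset ι) (f : ι → ℝ) :
    ∑ i ∈ s, |f i| = ∑ i ∈ s, f i + 2 * ∑ i ∈ s.filter (fun i => f i < 0), |f i| := by
  rw [← s.sum_filter_add_sum_filter_not (fun i => f i < 0),
    ← s.sum_filter_add_sum_filter_not (fun i => f i < 0) f]
  have hneg : ∑ i ∈ s.filter (fun i => f i < 0), f i =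
      -∑ i ∈ s.filter (fun i => f i < 0), |f i| := by
    rw [← Finset.sum_neg_distrib]
    exact Finset.sum_congr rfl fun i hi => by rw [abs_of_neg (Finset.mem_filter.mp hi).2, neg_neg]
  have hnonneg : ∑ i ∈ s.filter (fun i => ¬f i < 0), |f i| =
      ∑ i ∈ s.filter (fun i => ¬f i < 0), f i :=
    Finset.sum_congr rfl fun i hi => abs_of_nonneg (not_lt.mp (Finset.mem_filter.mp hi).2)
  rw [hneg, hnonneg]
  ring

namespace Matrix

variable {n 𝕜 : Type*} [Fintype n] [DecidableEq n] [RCLike 𝕜] {A B : Matrix n n 𝕜}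

theorem PosSemidef.trace_mul_nonneg (hA : A.PosSemidef) (hB : B.PosSemidef) :
    0 ≤ (A * B).trace := by
  open scoped MatrixOrder in
  obtain ⟨C, rfl⟩ := CStarAlgebra.nonneg_iff_eq_star_mul_self.mp hA.nonneg
  rw [star_eq_conjTranspose, Matrix.mul_assoc, trace_mul_comm]
  exact (hB.mul_mul_conjTranspose_same C).trace_nonneg

theorem IsHermitian.trace_cfc (hA : A.IsHermitian) (f : ℝ → ℝ) :
    (cfc f A).trace = ∑ i, (f (hA.eigenvalues i) : 𝕜) := by
  rw [hA.cfc_eq, IsHermitian.cfc, Unitary.conjStarAlgAut_apply, trace_mul_cycle,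
    Unitary.coe_star_mul_self, Matrix.one_mul, trace_diagonal]
  rfl

theorem IsHermitian.exists_involution_trace_mul_eq (hA : A.IsHermitian) :
    ∃ R : Matrix n n 𝕜, R.IsHermitian ∧ R * R = 1 ∧
      (A * R).trace = ∑ i, ((|hA.eigenvalues i| : ℝ) : 𝕜) := by
  have hcont (f : ℝ → ℝ) : ContinuousOn f (spectrum ℝ A) := A.finite_real_spectrum.continuousOn f
  let s : ℝ → ℝ := fun x => if 0 ≤ x then 1 else -1
  refine ⟨cfc s A, cfc_predicate s A, ?_, ?_⟩
  · rw [← cfc_mul s s A (hcont s) (hcont s), ← cfc_const_one ℝ A]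
    refine cfc_congr fun x _ => ?_
    by_cases hx : 0 ≤ x <;> simp [s, hx]
  · have hAR : A * cfc s A = cfc (fun x => x * s x) A := by
      rw [cfc_mul _ _ A (hcont _) (hcont s), cfc_id' ℝ A]
    rw [hAR, hA.trace_cfc]
    refine Finset.sum_congr rfl fun i _ => ?_
    by_cases hx : 0 ≤ hA.eigenvalues i
    · simp [s, hx, abs_of_nonneg hx]
    · simp [s, hx, abs_of_neg (not_le.mp hx)]

theorem IsHermitian.eigenvalues_sq_eq (hA : A.IsHermitian) {c : ℝ} (h : A * A = c • 1) (i : n) :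
    hA.eigenvalues i ^ 2 = c := by
  have : Nonempty n := ⟨i⟩
  have hmem := spectrum.pow_image_subset A 2 ⟨_, hA.eigenvalues_mem_spectrum_real i, rfl⟩
  rwa [sq, h, ← Algebra.algebraMap_eq_smul_one, spectrum.scalar_eq] at hmem

end Matrix

section PartialTranspose

variable {α β : Type*}

theorem trace_ptA [Fintype α] [Fintype β] (X : Matrix (α × β) (α × β) ℂ) :
    (ptA X).trace = X.trace := rfl

variable [DecidableEq α] [DecidableEq β]

variable (β) in
def singleKroneckerOne (i j : α) : Matrix (α × β) (α × β) ℂ := single i j 1 ⊗ₖ 1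

local notation "E" => singleKroneckerOne β

theorem conjTranspose_singleKroneckerOne (i j : α) : (E i j)ᴴ = E j i := by
  simp [singleKroneckerOne, conjTranspose_kronecker]

variable [Fintype α] [Fintype β]

theorem sum_singleKroneckerOne_mul :
    ∑ i : α, ∑ j, E i j * E j i = (Fintype.card α : Matrix (α × β) (α × β) ℂ) := by
  ext p q
  by_cases h : p.1 = q.1 <;>
    simp [singleKroneckerOne, Matrix.sum_apply, mul_apply, single_apply, one_apply,
      Matrix.natCast_apply, Fintype.sum_prod_type, ite_and, Prod.ext_iff, h, eq_comm (a := q.1)]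

theorem ptA_eq_sum (X : Matrix (α × β) (α × β) ℂ) : ptA X = ∑ i, ∑ j, E i j * X * E i j := by
  ext p q
  simp [singleKroneckerOne, ptA, Matrix.sum_apply, mul_apply, single_apply, one_apply,
    Fintype.sum_prod_type, ite_and]

theorem trace_ptA_mul (X Y : Matrix (α × β) (α × β) ℂ) :
    (ptA X * Y).trace = (X * ptA Y).trace := by
  simp only [ptA_eq_sum, Finset.sum_mul, Finset.mul_sum, trace_sum]
  refine Finset.sum_congr rfl fun i _ => Finset.sum_congr rfl fun j _ => ?_
  simp only [Matrix.mul_assoc]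
  rw [trace_mul_comm (E i j)]
  simp only [Matrix.mul_assoc]

theorem two_nsmul_card_sub_ptA {R : Matrix (α × β) (α × β) ℂ} (hR : R.IsHermitian)
    (hRR : R * R = 1) :
    2 • ((Fintype.card α : Matrix (α × β) (α × β) ℂ) - ptA R) =
      ∑ i, ∑ j, (E i j - R * E j i)ᴴ * (E i j - R * E j i) := by
  have hterm (i j : α) : (E i j - R * E j i)ᴴ * (E i j - R * E j i) =
      E j i * E i j + E i j * E j i - E j i * R * E j i - E i j * R * E i j := by
    rw [conjTranspose_sub, conjTranspose_mul, hR.eq, conjTranspose_singleKroneckerOne,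
      conjTranspose_singleKroneckerOne]
    have hcancel : E i j * R * (R * E j i) = E i j * E j i := by
      rw [Matrix.mul_assoc, ← Matrix.mul_assoc R, hRR, Matrix.one_mul]
    simp only [sub_mul, mul_sub, ← Matrix.mul_assoc] at hcancel ⊢
    rw [hcancel]
    abel
  simp only [hterm, Finset.sum_sub_distrib, Finset.sum_add_distrib, ptA_eq_sum]
  rw [Finset.sum_comm (f := fun i j => E j i * E i j),
    Finset.sum_comm (f := fun i j => E j i * R * E j i), sum_singleKroneckerOne_mul]
  abel

theorem posSemidef_card_sub_ptA {R : Matrix (α × β) (α × β) ℂ} (hR : R.IsHermitian)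
    (hRR : R * R = 1) : ((Fintype.card α : Matrix (α × β) (α × β) ℂ) - ptA R).PosSemidef := by
  have h := (posSemidef_sum Finset.univ fun i _ => posSemidef_sum Finset.univ fun j _ =>
    posSemidef_conjTranspose_mul_self (E i j - R * E j i)).smul (a := (1 / 2 : ℝ)) (by norm_num)
  rw [← two_nsmul_card_sub_ptA hR hRR, two_nsmul, smul_add, ← add_smul] at h
  norm_num at h
  exact h

variable {ρ : Matrix (α × β) (α × β) ℂ}

noncomputable def negativity (hH : (ptA ρ).IsHermitian) : ℝ :=
  ∑ i ∈ Finset.univ.filter (fun i => hH.eigenvalues i < 0), |hH.eigenvalues i|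

theorem two_mul_negativity (hH : (ptA ρ).IsHermitian) :
    2 * negativity hH = ∑ i, |hH.eigenvalues i| - (ρ.trace).re := by
  have hsum : ∑ i, hH.eigenvalues i = (ρ.trace).re := by
    rw [← trace_ptA, hH.trace_eq_sum_eigenvalues, Complex.re_sum]
    simp
  rw [Finset.sum_abs_eq_sum_add_two_mul, hsum, negativity]
  ring

theorem negativity_le (hρ : ρ.PosSemidef) (htr : ρ.trace = 1) (hH : (ptA ρ).IsHermitian) :
    negativity hH ≤ (Fintype.card α - 1) / 2 := by
  obtain ⟨R, hR, hRR, htrR⟩ := hH.exists_involution_trace_mul_eq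
  have hbound : ∑ i, |hH.eigenvalues i| ≤ Fintype.card α := by
    have h := (Complex.le_def.mp (hρ.trace_mul_nonneg (posSemidef_card_sub_ptA hR hRR))).1
    rw [mul_sub, trace_sub, ← trace_ptA_mul, htrR, ← Nat.cast_comm, ← nsmul_eq_mul, trace_smul,
      htr] at h
    simpa [← Complex.ofReal_sum] using h
  have h2 := two_mul_negativity hH
  rw [htr, Complex.one_re] at h2
  linarith

end PartialTranspose

theorem ptA_bell_apply (p q : Fin 2 × Fin 2) :
    ptA (of fun p q => bell p * star (bell q)) p q = if p = q.swap then 1 / 2 else 0 := by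
  have h : ((Real.sqrt 2 : ℂ))⁻¹ * ((Real.sqrt 2 : ℂ))⁻¹ = 2⁻¹ := by
    rw [← mul_inv, ← Complex.ofReal_mul, Real.mul_self_sqrt zero_le_two]
    norm_num
  rcases p with ⟨a, b⟩
  rcases q with ⟨c, d⟩
  simp only [ptA, bell, of_apply, Prod.ext_iff, Prod.fst_swap, Prod.snd_swap]
  by_cases hbc : b = c <;> by_cases had : a = d <;> simp [hbc, had, h, eq_comm]

theorem ptA_bell_mul_self :
    ptA (of fun p q => bell p * star (bell q)) * ptA (of fun p q => bell p * star (bell q)) =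
      (1 / 4 : ℝ) • 1 := by
  ext p q
  have hswap (r : Fin 2 × Fin 2) : p = r.swap ↔ r = p.swap := by
    rw [eq_comm, Prod.swap_eq_iff_eq_swap]
  simp only [mul_apply, ptA_bell_apply, hswap, ite_mul, zero_mul, Finset.sum_ite_eq',
    Finset.mem_univ, if_true, Matrix.smul_apply, one_apply, eq_comm (a := p.swap),
    Prod.swap_inj, eq_comm (a := q)]
  split_ifs <;> norm_num

theorem trace_bell : (of fun p q => bell p * star (bell q)).trace = 1 := by
  rw [← trace_ptA]
  simp only [trace, diag, ptA_bell_apply]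
  norm_num [Fintype.sum_prod_type, Fin.sum_univ_two]

theorem negativity_bell
    (hB : (ptA (of fun p q : Fin 2 × Fin 2 => bell p * star (bell q))).IsHermitian) :
    negativity hB = 1 / 2 := by
  have habs (i : Fin 2 × Fin 2) : |hB.eigenvalues i| = 1 / 2 := by
    rw [← sq_eq_sq₀ (abs_nonneg _) (by norm_num), sq_abs, hB.eigenvalues_sq_eq ptA_bell_mul_self]
    norm_num
  have h2 := two_mul_negativity hB
  simp only [habs, Finset.sum_const, Finset.card_univ, Fintype.card_prod, Fintype.card_fin,
    trace_bell, Complex.one_re] at h2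
  norm_num at h2
  linarith

/-- The bipartite negativity of any state on `ℂ² ⊗ H` (one qubit vs the rest) is at most
`1/2`, with equality attained for the Bell state. -/
theorem stmt11 {β : Type*} [Fintype β] [DecidableEq β]
    (ρ : Matrix (Fin 2 × β) (Fin 2 × β) ℂ) (hρ : ρ.PosSemidef) (htr : ρ.trace = 1)
    (hH : (ptA ρ).IsHermitian) :
    (∑ i ∈ Finset.univ.filter (fun i => hH.eigenvalues i < 0), |hH.eigenvalues i|) ≤ 1/2 ∧
    ∀ (hB : (ptA (Matrix.of fun p q : Fin 2 × Fin 2 => bell p * star (bell q))).IsHermitian),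
      (∑ i ∈ Finset.univ.filter (fun i => hB.eigenvalues i < 0), |hB.eigenvalues i|) = 1/2 :=
  ⟨(negativity_le hρ htr hH).trans (by norm_num), negativity_bell⟩
end
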